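/- arXiv:1202.1234 — 4 statements merged into one kernel-verified Lean document; each statement's English description precedes it below -/
import Mathlib

section
/- Every M×N matrix with unit-norm columns, where N ≥ M, has worst-case coherence μ ≥ √((N−M)/(M(N−1))). -/
/-!
The Gram matrix `ΦᴴΦ` and the frame operator `ΦΦᴴ` have the same Frobenius norm, since both
squared norms are the trace of `(ΦΦᴴ)²`. The frame operator is `M × M` with trace `N`, so
Cauchy–Schwarz on its diagonal gives `N² ≤ M ‖ΦᴴΦ‖²`. The Gram matrix has unit diagonal and
off-diagonal entries of modulus at most `μ`, so `‖ΦᴴΦ‖² ≤ N (1 + (N - 1) μ²)`.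
Comparing the two bounds gives `N - M ≤ M (N - 1) μ²`.
-/

open Finset RCLike

namespace Matrix

variable {𝕜 m n : Type*} [RCLike 𝕜] [Fintype m] [Fintype n]

theorem sum_norm_sq_eq_re_trace_mul_conjTranspose (A : Matrix m n 𝕜) :
    ∑ i, ∑ j, ‖A i j‖ ^ 2 = re (A * Aᴴ).trace := by
  simp only [trace, diag_apply, mul_apply, conjTranspose_apply, star_def, mul_conj, map_sum]
  norm_cast

theorem sum_norm_sq_conjTranspose_mul_self (A : Matrix m n 𝕜) :
    ∑ i, ∑ j, ‖(Aᴴ * A) i j‖ ^ 2 = ∑ i, ∑ j, ‖(A * Aᴴ) i j‖ ^ 2 := by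
  rw [sum_norm_sq_eq_re_trace_mul_conjTranspose, sum_norm_sq_eq_re_trace_mul_conjTranspose,
    (isHermitian_conjTranspose_mul_self A).eq, (isHermitian_mul_conjTranspose_self A).eq]
  simp only [Matrix.mul_assoc]
  rw [trace_mul_comm]
  simp only [Matrix.mul_assoc]

theorem re_trace_sq_le_card_mul_sum_norm_sq (A : Matrix n n 𝕜) :
    re A.trace ^ 2 ≤ Fintype.card n * ∑ i, ∑ j, ‖A i j‖ ^ 2 :=
  calc re A.trace ^ 2 = (∑ i, re (A i i)) ^ 2 := by simp [trace]
    _ ≤ Fintype.card n * ∑ i, re (A i i) ^ 2 := by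
      rw [← card_univ]
      exact sq_sum_le_card_mul_sum_sq
    _ ≤ Fintype.card n * ∑ i, ∑ j, ‖A i j‖ ^ 2 := by
      gcongr with i
      calc re (A i i) ^ 2 ≤ ‖A i i‖ ^ 2 := sq_le_sq.2 ((abs_re_le_norm _).trans (abs_norm _).ge)
        _ ≤ ∑ j, ‖A i j‖ ^ 2 :=
          single_le_sum (f := fun j ↦ ‖A i j‖ ^ 2) (fun _ _ ↦ by positivity) (mem_univ i)

omit [Fintype n] in
theorem conjTranspose_mul_self_apply_self (A : Matrix m n 𝕜) (j : n) :
    (Aᴴ * A) j j = ((∑ i, ‖A i j‖ ^ 2 : ℝ) : 𝕜) := by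
  simp only [mul_apply, conjTranspose_apply, star_def, RCLike.conj_mul]
  push_cast
  rfl

theorem sum_norm_sq_le_of_norm_apply_le (A : Matrix n n 𝕜) {μ : ℝ}
    (hdiag : ∀ i, ‖A i i‖ ≤ 1) (hoff : ∀ i j, i ≠ j → ‖A i j‖ ≤ μ) :
    ∑ i, ∑ j, ‖A i j‖ ^ 2 ≤ Fintype.card n * (1 + (Fintype.card n - 1) * μ ^ 2) := by
  classical
  have hrow (i : n) : ∑ j, ‖A i j‖ ^ 2 ≤ 1 + (Fintype.card n - 1) * μ ^ 2 := by
    rw [← add_sum_erase _ _ (mem_univ i)]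
    calc ‖A i i‖ ^ 2 + ∑ j ∈ univ.erase i, ‖A i j‖ ^ 2 ≤ 1 + ∑ j ∈ univ.erase i, μ ^ 2 := by
          gcongr with j hj
          · exact pow_le_one₀ (norm_nonneg _) (hdiag i)
          · exact hoff i j (ne_of_mem_erase hj).symm
      _ = 1 + (Fintype.card n - 1) * μ ^ 2 := by
          rw [sum_const, card_erase_of_mem (mem_univ i), nsmul_eq_mul,
            Nat.cast_sub (card_pos.2 ⟨i, mem_univ i⟩), card_univ, Nat.cast_one]
  calc ∑ i, ∑ j, ‖A i j‖ ^ 2 ≤ ∑ _i : n, (1 + (Fintype.card n - 1) * μ ^ 2) :=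
        sum_le_sum fun i _ ↦ hrow i
    _ = _ := by rw [sum_const, card_univ, nsmul_eq_mul]

theorem card_le_card_mul_of_norm_gram_offDiag_le [Nonempty n] (Φ : Matrix m n 𝕜)
    (hΦ : ∀ j, ∑ i, ‖Φ i j‖ ^ 2 = 1) {μ : ℝ} (hμ : ∀ i j, i ≠ j → ‖(Φᴴ * Φ) i j‖ ≤ μ) :
    (Fintype.card n : ℝ) ≤ Fintype.card m * (1 + (Fintype.card n - 1) * μ ^ 2) := by
  have htrace : re (Φ * Φᴴ).trace = Fintype.card n := by
    rw [← sum_norm_sq_eq_re_trace_mul_conjTranspose, sum_comm]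
    simp [hΦ]
  have hdiag (j : n) : ‖(Φᴴ * Φ) j j‖ ≤ 1 := by
    rw [conjTranspose_mul_self_apply_self, hΦ, ofReal_one, norm_one]
  have hsq : (Fintype.card n : ℝ) * Fintype.card n ≤
      Fintype.card n * (Fintype.card m * (1 + (Fintype.card n - 1) * μ ^ 2)) :=
    calc (Fintype.card n : ℝ) * Fintype.card n
        ≤ Fintype.card m * ∑ i, ∑ j, ‖(Φ * Φᴴ) i j‖ ^ 2 := by
          rw [← sq, ← htrace]; exact re_trace_sq_le_card_mul_sum_norm_sq _
      _ = Fintype.card m * ∑ i, ∑ j, ‖(Φᴴ * Φ) i j‖ ^ 2 := by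
          rw [sum_norm_sq_conjTranspose_mul_self]
      _ ≤ Fintype.card m * (Fintype.card n * (1 + (Fintype.card n - 1) * μ ^ 2)) := by
          gcongr; exact sum_norm_sq_le_of_norm_apply_le _ hdiag hμ
      _ = _ := by ring
  exact le_of_mul_le_mul_left hsq (by exact_mod_cast Fintype.card_pos)

theorem welch_bound (Φ : Matrix m n 𝕜) (hΦ : ∀ j, ∑ i, ‖Φ i j‖ ^ 2 = 1)
    (hn : 1 < Fintype.card n) {μ : ℝ} (hμ : ∀ i j, i ≠ j → ‖(Φᴴ * Φ) i j‖ ≤ μ) :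
    √((Fintype.card n - Fintype.card m) / (Fintype.card m * (Fintype.card n - 1))) ≤ μ := by
  obtain ⟨i, j, hij⟩ := Fintype.exists_pair_of_one_lt_card hn
  have : Nonempty n := ⟨i⟩
  have hn' : (1 : ℝ) < Fintype.card n := by exact_mod_cast hn
  have hcard := card_le_card_mul_of_norm_gram_offDiag_le Φ hΦ hμ
  refine Real.sqrt_le_iff.2 ⟨(norm_nonneg _).trans (hμ i j hij), div_le_of_le_mul₀ ?_ ?_ ?_⟩
  · exact mul_nonneg (Nat.cast_nonneg _) (by linarith)
  · positivity
  · linarith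

end Matrix

theorem stmt_2_general (M N : ℕ) (hN : 1 < N)
    (Φ : Matrix (Fin M) (Fin N) ℂ)
    (h_unit : ∀ j : Fin N, ∑ m : Fin M, ‖Φ m j‖ ^ 2 = 1)
    (μ : ℝ)
    (hμ : ∀ i j : Fin N, i ≠ j → ‖∑ m : Fin M, star (Φ m i) * Φ m j‖ ≤ μ) :
    Real.sqrt (((N : ℝ) - M) / (M * ((N : ℝ) - 1))) ≤ μ := by
  simpa only [Fintype.card_fin] using
    Matrix.welch_bound Φ h_unit (by rwa [Fintype.card_fin]) hμ

/-- Welch bound: every M×N matrix with unit-norm columns (N ≥ M, at least two columns)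
has worst-case coherence μ ≥ √((N−M)/(M(N−1))). -/
theorem stmt_2 (M N : ℕ) (hM : 0 < M) (hMN : M ≤ N) (hN : 1 < N)
    (Φ : Matrix (Fin M) (Fin N) ℂ)
    (h_unit : ∀ j : Fin N, ∑ m : Fin M, ‖Φ m j‖ ^ 2 = 1)
    (μ : ℝ)
    (hμ : ∀ i j : Fin N, i ≠ j → ‖∑ m : Fin M, star (Φ m i) * Φ m j‖ ≤ μ) :
    Real.sqrt (((N : ℝ) - M) / (M * ((N : ℝ) - 1))) ≤ μ :=
  stmt_2_general M N hN Φ h_unit μ hμ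
end

section
/- If a matrix Φ = [φ_1 ⋯ φ_N] has (K,θ̂)-flat restricted orthogonality, then it has restricted orthogonality constant θ_K ≤ C θ̂ log K, where one may take C = 75 (valid for all K ≥ 2). -/
/-!
Layer cake. A nonnegative vector is `u = ∫₀^D 1_{u ≥ t} dt` with `D = ‖u‖₂`, so bounds
`‖∑_{i ∈ I} c i‖ ≤ M √|I|` on indicator vectors give `‖∑ u i • c i‖ ≤ M ∫₀^D √f`, where
`f t = #{i | t ≤ u i} ≤ K`. Below `t₀ = D/√K` use `√f ≤ √K`; above it, AM-GM gives
`2√f ≤ t f / r + r / t`, and `∫ t f ≤ D²/2`, `∫_{t₀}^D dt/t = log √K`; with `r = D/√(log K)` the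
integral is at most `(1 + √(log K)/2) D`. Applying this in each variable bounds the Gram form on
nonnegative vectors by `θ̂ (1 + √(log K)/2)² ‖a‖ ‖b‖`; splitting complex vectors into their
nonnegative parts along `1, i, -1, -i` costs a factor `16`, and `16 (1 + √(log K)/2)² ≤ 75 log K`
for `K ≥ 2`.
-/

open MeasureTheory Finset Matrix

section Layer

variable {ι E : Type*} [NormedAddCommGroup E]

lemma sum_filter_le_eq_sum_indicator (S : Finset ι) (u : ι → ℝ) (F : ι → ℝ → E) (t : ℝ) :
    ∑ i ∈ S with t ≤ u i, F i t = ∑ i ∈ S, (Set.Iic (u i)).indicator (F i) t := by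
  simp only [sum_filter, Set.indicator_apply, Set.mem_Iic]

lemma intervalIntegrable_sum_filter_le (S : Finset ι) (u : ι → ℝ) {F : ι → ℝ → E} {a b : ℝ}
    (hF : ∀ i ∈ S, IntervalIntegrable (F i) volume a b) :
    IntervalIntegrable (fun t => ∑ i ∈ S with t ≤ u i, F i t) volume a b := by
  have h := IntervalIntegrable.sum S (f := fun i => (Set.Iic (u i)).indicator (F i))
    fun i hi => ⟨(hF i hi).1.indicator measurableSet_Iic, (hF i hi).2.indicator measurableSet_Iic⟩
  simpa only [Finset.sum_fn, ← sum_filter_le_eq_sum_indicator] using h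

variable [NormedSpace ℝ E]

lemma integral_sum_filter_le (S : Finset ι) {u : ι → ℝ} {F : ι → ℝ → E} {D : ℝ}
    (hu : ∀ i ∈ S, u i ∈ Set.Icc 0 D) (hF : ∀ i ∈ S, IntervalIntegrable (F i) volume 0 D) :
    ∫ t in 0..D, ∑ i ∈ S with t ≤ u i, F i t = ∑ i ∈ S, ∫ t in 0..u i, F i t := by
  simp only [sum_filter_le_eq_sum_indicator]
  rw [intervalIntegral.integral_finsetSum (f := fun i => (Set.Iic (u i)).indicator (F i))
    fun i hi => ⟨(hF i hi).1.indicator measurableSet_Iic, (hF i hi).2.indicator measurableSet_Iic⟩]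
  exact sum_congr rfl fun i hi => intervalIntegral.integral_indicator (hu i hi)

end Layer

lemma le_sqrt_sum_sq {ι : Type*} {S : Finset ι} {u : ι → ℝ} {i : ι} (hi : i ∈ S) :
    u i ≤ √(∑ j ∈ S, u j ^ 2) :=
  Real.le_sqrt_of_sq_le (single_le_sum (fun j _ => sq_nonneg (u j)) hi)

lemma two_mul_sqrt_le_add {n t r : ℝ} (hn : 0 ≤ n) (ht : 0 < t) (hr : 0 < r) :
    2 * √n ≤ t * n / r + r / t := by
  rw [div_add_div _ _ hr.ne' ht.ne', le_div_iff₀ (by positivity)]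
  nlinarith [sq_nonneg (t * √n - r), congrArg (t ^ 2 * ·) (Real.sq_sqrt hn)]

section Superlevel

variable {ι : Type*} (S : Finset ι) {u : ι → ℝ}

variable (u) in
lemma antitone_card_filter_le : Antitone fun t => (#{i ∈ S | t ≤ u i} : ℝ) := fun _ _ hst =>
  Nat.cast_le.2 <| card_le_card <| monotone_filter_right S fun _ _ h => hst.trans h

lemma mul_card_filter_eq_sum (t : ℝ) : t * #{i ∈ S | t ≤ u i} = ∑ i ∈ S with t ≤ u i, t := by
  rw [sum_const, nsmul_eq_mul, mul_comm]

lemma integral_mul_card_filter_le {a D : ℝ} (ha : 0 ≤ a) (haD : a ≤ D)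
    (hu : ∀ i ∈ S, u i ∈ Set.Icc 0 D) :
    ∫ t in a..D, t * #{i ∈ S | t ≤ u i} ≤ (∑ i ∈ S, u i ^ 2) / 2 := by
  simp only [mul_card_filter_eq_sum]
  have hid : ∀ i ∈ S, IntervalIntegrable (fun t : ℝ => t) volume 0 D :=
    fun _ _ => intervalIntegral.intervalIntegrable_id
  calc ∫ t in a..D, ∑ i ∈ S with t ≤ u i, t
      ≤ ∫ t in 0..D, ∑ i ∈ S with t ≤ u i, t :=
        intervalIntegral.integral_mono_interval ha haD le_rfl
          ((ae_restrict_iff' measurableSet_Ioc).2 <| Filter.Eventually.of_forall fun t ht =>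
            sum_nonneg fun _ _ => ht.1.le)
          (intervalIntegrable_sum_filter_le S u hid)
    _ = (∑ i ∈ S, u i ^ 2) / 2 := by
        rw [integral_sum_filter_le S hu hid, sum_div]
        simp

variable (u) in
lemma intervalIntegrable_sqrt_card_filter_le (a b : ℝ) :
    IntervalIntegrable (fun t => √(#{i ∈ S | t ≤ u i} : ℝ)) volume a b :=
  (Real.sqrt_monotone.comp_antitone (antitone_card_filter_le S u)).intervalIntegrable

lemma integral_sqrt_card_filter_le_div_add_mul_log {t₀ D r : ℝ} (ht₀ : 0 < t₀) (ht₀D : t₀ ≤ D)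
    (hr : 0 < r) (hu : ∀ i ∈ S, u i ∈ Set.Icc 0 D) :
    ∫ t in t₀..D, √(#{i ∈ S | t ≤ u i} : ℝ)
      ≤ ((∑ i ∈ S, u i ^ 2) / 2 / r + r * Real.log (D / t₀)) / 2 := by
  set f : ℝ → ℝ := fun t => #{i ∈ S | t ≤ u i}
  have htf_int : IntervalIntegrable (fun t => t * f t) volume t₀ D := by
    simpa only [f, mul_card_filter_eq_sum] using
      intervalIntegrable_sum_filter_le S u fun _ _ => intervalIntegral.intervalIntegrable_id
  have hinv_int : IntervalIntegrable (fun t : ℝ => r * t⁻¹) volume t₀ D :=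
    (intervalIntegral.intervalIntegrable_inv (fun t ht => by
      rw [Set.uIcc_of_le ht₀D] at ht; exact (ht₀.trans_le ht.1).ne') continuousOn_id).const_mul r
  calc ∫ t in t₀..D, √(f t) ≤ ∫ t in t₀..D, (t * f t / r + r * t⁻¹) / 2 :=
        intervalIntegral.integral_mono_on ht₀D (intervalIntegrable_sqrt_card_filter_le S u _ _)
          (((htf_int.div_const r).add hinv_int).div_const 2) fun t ht => by
          have := two_mul_sqrt_le_add (n := f t) (Nat.cast_nonneg _) (ht₀.trans_le ht.1) hr
          rw [← div_eq_mul_inv]; linarith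
    _ = ((∫ t in t₀..D, t * f t) / r + r * Real.log (D / t₀)) / 2 := by
        rw [intervalIntegral.integral_div,
          intervalIntegral.integral_add (htf_int.div_const r) hinv_int,
          intervalIntegral.integral_div, intervalIntegral.integral_const_mul,
          integral_inv_of_pos ht₀ (ht₀.trans_le ht₀D)]
    _ ≤ ((∑ i ∈ S, u i ^ 2) / 2 / r + r * Real.log (D / t₀)) / 2 := by
        gcongr
        exact integral_mul_card_filter_le S ht₀.le ht₀D hu

lemma integral_sqrt_card_filter_le {K : ℝ} (hK : 1 < K) (hS : #S ≤ K) (hu : ∀ i ∈ S, 0 ≤ u i) :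
    ∫ t in 0..√(∑ i ∈ S, u i ^ 2), √(#{i ∈ S | t ≤ u i} : ℝ)
      ≤ (1 + √(Real.log K) / 2) * √(∑ i ∈ S, u i ^ 2) := by
  set D := √(∑ i ∈ S, u i ^ 2)
  obtain hD | hD : 0 = D ∨ 0 < D := (Real.sqrt_nonneg _).eq_or_lt
  · rw [← hD]; simp
  have hL : 0 < Real.log K := Real.log_pos hK
  have hsqrtK : 1 < √K := Real.lt_sqrt_of_sq_lt (by linarith)
  set t₀ := D / √K
  set r := D / √(Real.log K)
  have ht₀ : 0 < t₀ := by positivity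
  have ht₀D : t₀ ≤ D := div_le_self hD.le hsqrtK.le
  have hlow : ∫ t in 0..t₀, √(#{i ∈ S | t ≤ u i} : ℝ) ≤ D := by
    calc ∫ t in 0..t₀, √(#{i ∈ S | t ≤ u i} : ℝ) ≤ ∫ _ in 0..t₀, √K :=
          intervalIntegral.integral_mono_on ht₀.le (intervalIntegrable_sqrt_card_filter_le S u _ _)
            intervalIntegrable_const
            fun t _ => Real.sqrt_le_sqrt <| (Nat.cast_le.2 (card_filter_le _ _)).trans hS
      _ = D := by simp [t₀, (zero_lt_one.trans hsqrtK).ne']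
  have hhigh : ∫ t in t₀..D, √(#{i ∈ S | t ≤ u i} : ℝ) ≤ √(Real.log K) / 2 * D := by
    refine (integral_sqrt_card_filter_le_div_add_mul_log S (r := r) ht₀ ht₀D (by positivity)
      fun i hi => ⟨hu i hi, le_sqrt_sum_sq hi⟩).trans_eq ?_
    have hDt₀ : D / t₀ = √K := by
      simp only [t₀]; field_simp
    have hsum : ∑ i ∈ S, u i ^ 2 = D ^ 2 := (Real.sq_sqrt (by positivity)).symm
    rw [hsum, hDt₀, Real.log_sqrt (by linarith)]
    simp only [r]
    field_simp
    linear_combination -Real.sq_sqrt hL.le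
  rw [← intervalIntegral.integral_add_adjacent_intervals
    (intervalIntegrable_sqrt_card_filter_le S u 0 t₀)
    (intervalIntegrable_sqrt_card_filter_le S u t₀ D)]
  linarith

end Superlevel

lemma norm_sum_smul_le_of_norm_sum_le {ι E : Type*} [NormedAddCommGroup E] [NormedSpace ℝ E]
    [CompleteSpace E]
    (S : Finset ι) {c : ι → E} {u : ι → ℝ} {K M : ℝ} (hK : 1 < K) (hS : #S ≤ K) (hM : 0 ≤ M)
    (hc : ∀ I ⊆ S, ‖∑ i ∈ I, c i‖ ≤ M * √(#I : ℝ)) (hu : ∀ i ∈ S, 0 ≤ u i) :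
    ‖∑ i ∈ S, u i • c i‖ ≤ M * (1 + √(Real.log K) / 2) * √(∑ i ∈ S, u i ^ 2) := by
  set D := √(∑ i ∈ S, u i ^ 2)
  have hlayer : ∑ i ∈ S, u i • c i = ∫ t in 0..D, ∑ i ∈ S with t ≤ u i, c i := by
    rw [integral_sum_filter_le S (fun i hi => ⟨hu i hi, le_sqrt_sum_sq hi⟩)
      fun _ _ => intervalIntegrable_const]
    simp only [intervalIntegral.integral_const, sub_zero]
  rw [hlayer]
  calc ‖∫ t in 0..D, ∑ i ∈ S with t ≤ u i, c i‖ ≤ ∫ t in 0..D, M * √(#{i ∈ S | t ≤ u i} : ℝ) :=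
        intervalIntegral.norm_integral_le_of_norm_le (Real.sqrt_nonneg _)
          (ae_of_all _ fun t _ => hc _ (filter_subset _ _))
          ((intervalIntegrable_sqrt_card_filter_le S u 0 D).const_mul M)
    _ = M * ∫ t in 0..D, √(#{i ∈ S | t ≤ u i} : ℝ) := intervalIntegral.integral_const_mul _ _
    _ ≤ M * ((1 + √(Real.log K) / 2) * D) :=
        mul_le_mul_of_nonneg_left (integral_sqrt_card_filter_le S hK hS hu) hM
    _ = M * (1 + √(Real.log K) / 2) * D := by ring

lemma norm_sum_sum_smul_le {ι κ E : Type*} [NormedAddCommGroup E] [NormedSpace ℝ E]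
    [CompleteSpace E]
    (S : Finset ι) (T : Finset κ) {B : ι → κ → E} {a : ι → ℝ} {b : κ → ℝ} {K θ : ℝ}
    (hK : 1 < K) (hS : #S ≤ K) (hT : #T ≤ K) (hθ : 0 ≤ θ)
    (hB : ∀ I ⊆ S, ∀ J ⊆ T, ‖∑ i ∈ I, ∑ j ∈ J, B i j‖ ≤ θ * √((#I : ℝ) * #J))
    (ha : ∀ i ∈ S, 0 ≤ a i) (hb : ∀ j ∈ T, 0 ≤ b j) :
    ‖∑ i ∈ S, ∑ j ∈ T, (a i * b j) • B i j‖
      ≤ θ * (1 + √(Real.log K) / 2) ^ 2 * √(∑ i ∈ S, a i ^ 2) * √(∑ j ∈ T, b j ^ 2) := by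
  set C := 1 + √(Real.log K) / 2
  have hcol : ∀ J ⊆ T,
      ‖∑ j ∈ J, ∑ i ∈ S, a i • B i j‖ ≤ θ * C * √(∑ i ∈ S, a i ^ 2) * √(#J : ℝ) := by
    intro J hJ
    rw [sum_comm]
    simp only [← smul_sum]
    refine (norm_sum_smul_le_of_norm_sum_le S (M := θ * √(#J : ℝ)) hK hS (by positivity)
      (fun I hI => ?_) ha).trans_eq (by ring)
    calc ‖∑ i ∈ I, ∑ j ∈ J, B i j‖ ≤ θ * √((#I : ℝ) * #J) := hB I hI J hJ
      _ = θ * √(#J : ℝ) * √(#I : ℝ) := by rw [Real.sqrt_mul (Nat.cast_nonneg _)]; ring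
  have hswap : ∑ i ∈ S, ∑ j ∈ T, (a i * b j) • B i j = ∑ j ∈ T, b j • ∑ i ∈ S, a i • B i j := by
    rw [sum_comm]
    simp only [smul_sum, smul_smul, mul_comm]
  rw [hswap]
  exact (norm_sum_smul_le_of_norm_sum_le T (M := θ * C * √(∑ i ∈ S, a i ^ 2)) hK hT
    (by positivity) hcol hb).trans_eq (by ring)

open ComplexConjugate in
def quarterPart (k : ℕ) (z : ℂ) : ℝ := max (z * conj (Complex.I ^ k)).re 0

lemma sum_range_four_I_pow_mul_quarterPart (z : ℂ) :
    ∑ k ∈ range 4, Complex.I ^ k * quarterPart k z = z := by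
  simp only [sum_range_succ, range_zero, sum_empty, quarterPart]
  apply Complex.ext <;> simp [pow_succ] <;> linarith [max_zero_sub_max_neg_zero_eq_self z.re,
    max_zero_sub_max_neg_zero_eq_self z.im]

lemma quarterPart_nonneg (k : ℕ) (z : ℂ) : 0 ≤ quarterPart k z := le_max_right _ _

lemma quarterPart_le_norm (k : ℕ) (z : ℂ) : quarterPart k z ≤ ‖z‖ := by
  refine max_le ((Complex.re_le_norm _).trans_eq ?_) (norm_nonneg z)
  simp

lemma sqrt_sum_sq_quarterPart_le {ι : Type*} (S : Finset ι) (k : ℕ) (x : ι → ℂ) :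
    √(∑ i ∈ S, quarterPart k (x i) ^ 2) ≤ √(∑ i ∈ S, ‖x i‖ ^ 2) :=
  Real.sqrt_le_sqrt <| sum_le_sum fun _ _ =>
    pow_le_pow_left₀ (quarterPart_nonneg _ _) (quarterPart_le_norm _ _) 2

lemma norm_sum_sum_star_mul_mul_le {ι κ : Type*} (S : Finset ι) (T : Finset κ)
    {B : ι → κ → ℂ} {K θ : ℝ} (hK : 1 < K) (hS : #S ≤ K) (hT : #T ≤ K) (hθ : 0 ≤ θ)
    (hB : ∀ I ⊆ S, ∀ J ⊆ T, ‖∑ i ∈ I, ∑ j ∈ J, B i j‖ ≤ θ * √((#I : ℝ) * #J))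
    (x : ι → ℂ) (y : κ → ℂ) :
    ‖∑ i ∈ S, ∑ j ∈ T, star (x i) * y j * B i j‖
      ≤ 16 * (θ * (1 + √(Real.log K) / 2) ^ 2 * √(∑ i ∈ S, ‖x i‖ ^ 2)
        * √(∑ j ∈ T, ‖y j‖ ^ 2)) := by
  set p : ℕ → ι → ℝ := fun k i => quarterPart k (x i)
  set q : ℕ → κ → ℝ := fun l j => quarterPart l (y j)
  have hexp : ∑ i ∈ S, ∑ j ∈ T, star (x i) * y j * B i j
      = ∑ k ∈ range 4, ∑ l ∈ range 4,
          (star (Complex.I ^ k) * Complex.I ^ l) * ∑ i ∈ S, ∑ j ∈ T, (p k i * q l j) • B i j := by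
    calc ∑ i ∈ S, ∑ j ∈ T, star (x i) * y j * B i j
        = ∑ i ∈ S, ∑ j ∈ T, star (∑ k ∈ range 4, Complex.I ^ k * p k i)
            * (∑ l ∈ range 4, Complex.I ^ l * q l j) * B i j := by
          simp only [p, q, sum_range_four_I_pow_mul_quarterPart]
      _ = _ := by
          simp only [star_sum, sum_mul, mul_sum, sum_comm (s := T) (t := range 4),
            sum_comm (s := S) (t := range 4)]
          rw [sum_comm]
          refine sum_congr rfl fun k _ => sum_congr rfl fun l _ => sum_congr rfl fun i _ =>
            sum_congr rfl fun j _ => ?_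
          simp only [Complex.real_smul, star_mul', Complex.star_def, Complex.conj_ofReal]
          push_cast
          ring
  have hpq : ∀ k l, ‖∑ i ∈ S, ∑ j ∈ T, (p k i * q l j) • B i j‖
      ≤ θ * (1 + √(Real.log K) / 2) ^ 2 * √(∑ i ∈ S, ‖x i‖ ^ 2) * √(∑ j ∈ T, ‖y j‖ ^ 2) := by
    intro k l
    refine (norm_sum_sum_smul_le S T hK hS hT hθ hB (fun _ _ => quarterPart_nonneg _ _)
      fun _ _ => quarterPart_nonneg _ _).trans ?_
    have hx := sqrt_sum_sq_quarterPart_le S k x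
    have hy := sqrt_sum_sq_quarterPart_le T l y
    gcongr
  rw [hexp]
  refine (norm_sum_le _ _).trans <| (sum_le_sum fun k _ => norm_sum_le _ _).trans ?_
  calc ∑ k ∈ range 4, ∑ l ∈ range 4,
        ‖(star (Complex.I ^ k) * Complex.I ^ l) * ∑ i ∈ S, ∑ j ∈ T, (p k i * q l j) • B i j‖
      ≤ ∑ k ∈ range 4, ∑ l ∈ range 4,
          θ * (1 + √(Real.log K) / 2) ^ 2 * √(∑ i ∈ S, ‖x i‖ ^ 2) * √(∑ j ∈ T, ‖y j‖ ^ 2) :=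
        sum_le_sum fun k _ => sum_le_sum fun l _ => by
          simpa only [norm_mul, norm_star, norm_pow, Complex.norm_I, one_pow, one_mul] using hpq k l
    _ = _ := by simp only [sum_const, card_range, nsmul_eq_mul, Nat.cast_ofNat]; ring

lemma sixteen_mul_sq_le_log {K : ℝ} (hK : 2 ≤ K) :
    16 * (1 + √(Real.log K) / 2) ^ 2 ≤ 75 * Real.log K := by
  have hlog : 16 / 25 < Real.log K := by
    linarith [Real.log_two_gt_d9, Real.log_le_log two_pos hK]
  have hs : 4 / 5 < √(Real.log K) := Real.lt_sqrt_of_sq_lt (by linarith)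
  nlinarith [Real.sq_sqrt (by linarith : 0 ≤ Real.log K)]

lemma Matrix.mulVec_eq_sum_of_eq_zero {m n α : Type*} [Fintype n] [NonUnitalNonAssocSemiring α]
    (A : Matrix m n α) {S : Finset n} {x : n → α} (hx : ∀ i ∉ S, x i = 0) (r : m) :
    (A *ᵥ x) r = ∑ i ∈ S, A r i * x i := by
  refine (sum_subset (subset_univ S) fun i _ hi => ?_).symm
  rw [hx i hi, mul_zero]

lemma sum_star_mul_eq_sum_sum_gram {m n : Type*} [Fintype m] (Φ : Matrix m n ℂ)
    (S T : Finset n) (x y : n → ℂ) :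
    ∑ r, star (∑ i ∈ S, Φ r i * x i) * ∑ j ∈ T, Φ r j * y j
      = ∑ i ∈ S, ∑ j ∈ T, star (x i) * y j * (Φᴴ * Φ) i j := by
  simp only [Matrix.mul_apply, Matrix.conjTranspose_apply, star_sum, sum_mul, mul_sum, star_mul']
  simp only [sum_comm (s := (univ : Finset m)), sum_comm (s := T) (t := S)]
  exact sum_congr rfl fun i _ => sum_congr rfl fun j _ => sum_congr rfl fun r _ => by ring

/-- Flat restricted orthogonality implies restricted orthogonality:
if Φ has (K,θhat)-flat restricted orthogonality then θ_K ≤ 75·θhat·log K (K ≥ 2). -/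
theorem stmt_6 (M N K : ℕ) (hK : 2 ≤ K) (Φ : Matrix (Fin M) (Fin N) ℂ)
    (θhat : ℝ) (hθhat : 0 ≤ θhat)
    (hFRO : ∀ I J : Finset (Fin N), Disjoint I J → I.card ≤ K → J.card ≤ K →
      ‖∑ m : Fin M, star (∑ i ∈ I, Φ m i) * (∑ j ∈ J, Φ m j)‖
        ≤ θhat * Real.sqrt ((I.card : ℝ) * (J.card : ℝ))) :
    ∀ x y : Fin N → ℂ,
      (∃ S T : Finset (Fin N), Disjoint S T ∧ S.card ≤ K ∧ T.card ≤ K ∧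
        (∀ n ∉ S, x n = 0) ∧ (∀ n ∉ T, y n = 0)) →
      ‖∑ m : Fin M, star (Φ.mulVec x m) * Φ.mulVec y m‖
        ≤ 75 * θhat * Real.log K *
          Real.sqrt (∑ n : Fin N, ‖x n‖ ^ 2) * Real.sqrt (∑ n : Fin N, ‖y n‖ ^ 2) := by
  rintro x y ⟨S, T, hST, hS, hT, hxS, hyT⟩
  have hB : ∀ I ⊆ S, ∀ J ⊆ T, ‖∑ i ∈ I, ∑ j ∈ J, (Φᴴ * Φ) i j‖ ≤ θhat * √((#I : ℝ) * #J) :=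
    fun I hI J hJ => by
      have hgram := sum_star_mul_eq_sum_sum_gram Φ I J 1 1
      simp only [Pi.one_apply, mul_one, star_one, one_mul] at hgram
      rw [← hgram]
      exact hFRO I J (hST.mono hI hJ) ((card_le_card hI).trans hS) ((card_le_card hJ).trans hT)
  simp only [Φ.mulVec_eq_sum_of_eq_zero hxS, Φ.mulVec_eq_sum_of_eq_zero hyT,
    sum_star_mul_eq_sum_sum_gram]
  have hsub : ∀ (U : Finset (Fin N)) (z : Fin N → ℂ),
      √(∑ n ∈ U, ‖z n‖ ^ 2) ≤ √(∑ n, ‖z n‖ ^ 2) :=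
    fun U z => Real.sqrt_le_sqrt <|
      sum_le_sum_of_subset_of_nonneg (subset_univ U) fun _ _ _ => sq_nonneg _
  have hx := hsub S x
  have hy := hsub T y
  have hC := sixteen_mul_sq_le_log (K := K) (by exact_mod_cast hK)
  calc _ ≤ 16 * (θhat * (1 + √(Real.log K) / 2) ^ 2 * √(∑ n ∈ S, ‖x n‖ ^ 2)
          * √(∑ n ∈ T, ‖y n‖ ^ 2)) :=
        norm_sum_sum_star_mul_mul_le S T (by exact_mod_cast hK) (by exact_mod_cast hS)
          (by exact_mod_cast hT) hθhat hB x y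
    _ = θhat * (16 * (1 + √(Real.log K) / 2) ^ 2) * √(∑ n ∈ S, ‖x n‖ ^ 2)
          * √(∑ n ∈ T, ‖y n‖ ^ 2) := by ring
    _ ≤ θhat * (75 * Real.log K) * √(∑ n, ‖x n‖ ^ 2) * √(∑ n, ‖y n‖ ^ 2) := by gcongr
    _ = _ := by ring
end

section
/- If a matrix Φ = [φ_1 ⋯ φ_N] satisfies |⟨Σ_{i∈I} φ_i, Σ_{j∈J} φ_j⟩| ≤ θ̂ (|I||J|)^{1/2} for all disjoint I, J with |I|,|J| ≤ K, then the same inequality holds when the sums are replaced by Σ_{i∈I} x_i φ_i and Σ_{j∈J} y_j φ_j for arbitrary coefficients x_i, y_j ∈ [0,1]. -/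
/-- An affine function of coefficients in `[0,1]` is bounded by the bound at
the cube vertices (which are indicator sums over subsets). -/
lemma cube_bound {ι : Type*} [DecidableEq ι] (J : Finset ι) (a : ℂ) (b : ι → ℂ) (C : ℝ)
    (h : ∀ S ⊆ J, ‖a + ∑ j ∈ S, b j‖ ≤ C) :
    ∀ y : ι → ℝ, (∀ j, 0 ≤ y j ∧ y j ≤ 1) →
      ‖a + ∑ j ∈ J, (y j : ℂ) * b j‖ ≤ C := by
  induction J using Finset.induction_on generalizing a with
  | empty =>
    intro y hy
    simpa using h ∅ (by simp)
  | @insert j0 J' hj0 ih =>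
    intro y hy
    have key : a + ∑ j ∈ insert j0 J', (y j : ℂ) * b j
        = (1 - (y j0 : ℂ)) * (a + ∑ j ∈ J', (y j : ℂ) * b j)
          + (y j0 : ℂ) * ((a + b j0) + ∑ j ∈ J', (y j : ℂ) * b j) := by
      rw [Finset.sum_insert hj0]; ring
    have h1 := ih a (fun S hS => h S (hS.trans (Finset.subset_insert _ _))) y hy
    have h2 := ih (a + b j0) (fun S hS => by
        have hne : j0 ∉ S := fun hmem => hj0 (hS hmem)
        have := h (insert j0 S) (Finset.insert_subset_insert _ hS)
        rw [Finset.sum_insert hne] at this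
        rwa [add_assoc]) y hy
    have hy0 := hy j0
    have hn1 : ‖(1 - (y j0 : ℂ))‖ = 1 - y j0 := by
      rw [show (1 - (y j0 : ℂ)) = ((1 - y j0 : ℝ) : ℂ) by push_cast; ring,
        Complex.norm_real, Real.norm_eq_abs, abs_of_nonneg (by linarith [hy0.2])]
    have hn2 : ‖((y j0 : ℝ) : ℂ)‖ = y j0 := by
      rw [Complex.norm_real, Real.norm_eq_abs, abs_of_nonneg hy0.1]
    calc ‖a + ∑ j ∈ insert j0 J', (y j : ℂ) * b j‖
        ≤ ‖(1 - (y j0 : ℂ)) * (a + ∑ j ∈ J', (y j : ℂ) * b j)‖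
          + ‖(y j0 : ℂ) * ((a + b j0) + ∑ j ∈ J', (y j : ℂ) * b j)‖ := by
          rw [key]; exact norm_add_le _ _
      _ = (1 - y j0) * ‖a + ∑ j ∈ J', (y j : ℂ) * b j‖
          + y j0 * ‖(a + b j0) + ∑ j ∈ J', (y j : ℂ) * b j‖ := by
          rw [norm_mul, norm_mul, hn1, hn2]
      _ ≤ (1 - y j0) * C + y j0 * C := by
          have t1 := mul_le_mul_of_nonneg_left h1 (show (0:ℝ) ≤ 1 - y j0 by linarith [hy0.2])
          have t2 := mul_le_mul_of_nonneg_left h2 hy0.1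
          linarith
      _ = C := by ring

/-- Flat restricted orthogonality extends from {0,1}-coefficients to
coefficients in [0,1]. -/
theorem stmt_7 (M N K : ℕ) (Φ : Matrix (Fin M) (Fin N) ℂ) (θhat : ℝ)
    (hFRO : ∀ I J : Finset (Fin N), Disjoint I J → I.card ≤ K → J.card ≤ K →
      ‖∑ m : Fin M, star (∑ i ∈ I, Φ m i) * (∑ j ∈ J, Φ m j)‖
        ≤ θhat * Real.sqrt ((I.card : ℝ) * (J.card : ℝ))) :
    ∀ (I J : Finset (Fin N)), Disjoint I J → I.card ≤ K → J.card ≤ K →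
      ∀ (x y : Fin N → ℝ), (∀ i, 0 ≤ x i ∧ x i ≤ 1) → (∀ j, 0 ≤ y j ∧ y j ≤ 1) →
      ‖∑ m : Fin M, star (∑ i ∈ I, (x i : ℂ) * Φ m i) * (∑ j ∈ J, (y j : ℂ) * Φ m j)‖
        ≤ θhat * Real.sqrt ((I.card : ℝ) * (J.card : ℝ)) := by
  intro I J hIJ hI hJ x y hx hy
  -- trivial cases
  rcases I.eq_empty_or_nonempty with rfl | ⟨i0, hi0⟩
  · simp
  rcases J.eq_empty_or_nonempty with rfl | ⟨j0, hj0⟩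
  · simp
  -- θhat is nonnegative
  have hθ : 0 ≤ θhat := by
    have hd : Disjoint ({i0} : Finset (Fin N)) {j0} := by
      simp only [Finset.disjoint_singleton]
      exact fun h => (Finset.disjoint_left.mp hIJ hi0) (h ▸ hj0)
    have h1 : (1 : ℕ) ≤ K := le_trans (Finset.one_le_card.mpr ⟨i0, hi0⟩) hI
    have h2 : (1 : ℕ) ≤ K := le_trans (Finset.one_le_card.mpr ⟨j0, hj0⟩) hJ
    have := hFRO {i0} {j0} hd (by simpa using h1) (by simpa using h2)
    simp only [Finset.card_singleton, Nat.cast_one, one_mul, Real.sqrt_one,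
      mul_one] at this
    exact le_trans (norm_nonneg _) this
  set C := θhat * Real.sqrt ((I.card : ℝ) * (J.card : ℝ)) with hC
  -- the vertex bound: both coefficient vectors {0,1}
  have vertex : ∀ T ⊆ I, ∀ S ⊆ J,
      ‖∑ m : Fin M, star (∑ i ∈ T, Φ m i) * (∑ j ∈ S, Φ m j)‖ ≤ C := by
    intro T hT S hS
    have hd : Disjoint T S := hIJ.mono hT hS
    have := hFRO T S hd (le_trans (Finset.card_le_card hT) hI)
      (le_trans (Finset.card_le_card hS) hJ)
    refine le_trans this ?_
    apply mul_le_mul_of_nonneg_left _ hθ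
    apply Real.sqrt_le_sqrt
    have h1 : (T.card : ℝ) ≤ I.card := by exact_mod_cast Finset.card_le_card hT
    have h2 : (S.card : ℝ) ≤ J.card := by exact_mod_cast Finset.card_le_card hS
    have := Nat.cast_nonneg (α := ℝ) T.card
    have := Nat.cast_nonneg (α := ℝ) S.card
    nlinarith
  -- step 1: allow x ∈ [0,1] with fixed vertex S on the right
  have stepx : ∀ S ⊆ J,
      ‖∑ m : Fin M, star (∑ i ∈ I, (x i : ℂ) * Φ m i) * (∑ j ∈ S, Φ m j)‖ ≤ C := by
    intro S hS
    have e1 : ∑ m : Fin M, star (∑ i ∈ I, (x i : ℂ) * Φ m i) * (∑ j ∈ S, Φ m j)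
        = ∑ i ∈ I, (x i : ℂ) * ∑ m : Fin M, star (Φ m i) * (∑ j ∈ S, Φ m j) := by
      have ptw : ∀ m : Fin M, star (∑ i ∈ I, (x i : ℂ) * Φ m i) * (∑ j ∈ S, Φ m j)
          = ∑ i ∈ I, (x i : ℂ) * (star (Φ m i) * (∑ j ∈ S, Φ m j)) := by
        intro m
        rw [star_sum, Finset.sum_mul]
        refine Finset.sum_congr rfl fun i _ => ?_
        simp only [star_mul', Complex.star_def, Complex.conj_ofReal]
        ring
      simp only [ptw]
      rw [Finset.sum_comm]
      exact Finset.sum_congr rfl fun i _ => (Finset.mul_sum _ _ _).symm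
    rw [e1]
    have := cube_bound I 0 (fun i => ∑ m : Fin M, star (Φ m i) * (∑ j ∈ S, Φ m j)) C
      (fun T hT => by
        rw [zero_add, Finset.sum_comm]
        have e2 : ∀ m : Fin M, ∑ i ∈ T, star (Φ m i) * (∑ j ∈ S, Φ m j)
            = star (∑ i ∈ T, Φ m i) * (∑ j ∈ S, Φ m j) := fun m => by
          rw [star_sum, Finset.sum_mul]
        simp only [e2]
        exact vertex T hT S hS) x hx
    simpa using this
  -- step 2: allow y ∈ [0,1]
  have e3 : ∑ m : Fin M, star (∑ i ∈ I, (x i : ℂ) * Φ m i) * (∑ j ∈ J, (y j : ℂ) * Φ m j)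
      = ∑ j ∈ J, (y j : ℂ) * ∑ m : Fin M, star (∑ i ∈ I, (x i : ℂ) * Φ m i) * Φ m j := by
    have ptw : ∀ m : Fin M, star (∑ i ∈ I, (x i : ℂ) * Φ m i) * (∑ j ∈ J, (y j : ℂ) * Φ m j)
        = ∑ j ∈ J, (y j : ℂ) * (star (∑ i ∈ I, (x i : ℂ) * Φ m i) * Φ m j) := by
      intro m
      rw [Finset.mul_sum]
      exact Finset.sum_congr rfl fun j _ => by ring
    simp only [ptw]
    rw [Finset.sum_comm]
    exact Finset.sum_congr rfl fun j _ => (Finset.mul_sum _ _ _).symm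
  rw [e3]
  have := cube_bound J 0 (fun j => ∑ m : Fin M, star (∑ i ∈ I, (x i : ℂ) * Φ m i) * Φ m j) C
    (fun S hS => by
      rw [zero_add, Finset.sum_comm]
      have e4 : ∀ m : Fin M, ∑ j ∈ S, star (∑ i ∈ I, (x i : ℂ) * Φ m i) * Φ m j
          = star (∑ i ∈ I, (x i : ℂ) * Φ m i) * (∑ j ∈ S, Φ m j) := fun m => by
        rw [Finset.mul_sum]
      simp only [e4]
      exact stepx S hS) y hy
  simpa using this
end

section
/- Let G be the Paley graph of prime order p ≡ 1 (mod 4). Then the clique number satisfies ω(G) < √p. -/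
/-!
If all pairwise differences of a set `t` in a field are squares and `s` is a nonsquare, then the
sums `a + s * b` with `a, b ∈ t` are pairwise distinct: from `a + s * b = a' + s * b'` with
`b ≠ b'` we would get `s = (a - a') / (b' - b)`, a quotient of squares. Hence a clique `t` of the
Paley graph satisfies `#t ^ 2 ≤ p`, and equality is impossible because `√p` is irrational.
-/

open Finset

theorem Set.injOn_add_mul_of_isSquare_sub {F : Type*} [Field F] {s : F} (hs : ¬IsSquare s)
    {t : Set F} (ht : ∀ a ∈ t, ∀ b ∈ t, IsSquare (b - a)) :
    (t ×ˢ t).InjOn fun x : F × F => x.1 + s * x.2 := by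
  rintro ⟨a, b⟩ ⟨ha, hb⟩ ⟨a', b'⟩ ⟨ha', hb'⟩ heq
  have hdiff : a - a' = s * (b' - b) := by linear_combination heq
  obtain rfl | hbb := eq_or_ne b b'
  · simpa [sub_eq_zero] using hdiff
  · have hs_eq : s = (a - a') / (b' - b) := by
      rw [hdiff, mul_div_cancel_right₀ _ (sub_ne_zero.mpr hbb.symm)]
    exact absurd ((ht a' ha' a ha).div (ht b hb b' hb')) (hs_eq ▸ hs)

theorem Finset.card_sq_le_card_of_isSquare_sub {F : Type*} [Field F] [Fintype F]
    (hF : ringChar F ≠ 2) {t : Finset F} (ht : ∀ a ∈ t, ∀ b ∈ t, IsSquare (b - a)) :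
    #t ^ 2 ≤ Fintype.card F := by
  obtain ⟨s, hs⟩ := FiniteField.exists_nonsquare hF
  have hinj := Set.injOn_add_mul_of_isSquare_sub hs (t := ↑t) ht
  rw [← coe_product] at hinj
  simpa [sq] using card_le_card_of_injOn _ (fun _ _ => mem_univ _) hinj

/-- The Paley graph of prime order p ≡ 1 (mod 4) has clique number less than √p. -/
theorem stmt_15 (p : ℕ) [Fact p.Prime] (hp : p % 4 = 1)
    (G : SimpleGraph (ZMod p))
    (hadj : ∀ a b : ZMod p, G.Adj a b ↔ a ≠ b ∧ IsSquare (b - a)) :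
    ∀ t : Finset (ZMod p), G.IsClique ↑t → (t.card : ℝ) < Real.sqrt p := by
  intro t ht
  have hchar : ringChar (ZMod p) ≠ 2 := by rw [ZMod.ringChar_zmod_n]; omega
  have hsq : ∀ a ∈ t, ∀ b ∈ t, IsSquare (b - a) := by
    intro a ha b hb
    obtain rfl | hab := eq_or_ne a b
    · simp
    · exact ((hadj a b).mp (ht ha hb hab)).2
  have hcard := card_sq_le_card_of_isSquare_sub hchar hsq
  rw [ZMod.card] at hcard
  have hle : (#t : ℝ) ≤ √p := Real.le_sqrt_of_sq_le (mod_cast hcard)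
  exact hle.lt_of_ne ((Fact.out : p.Prime).irrational_sqrt.ne_nat _).symm
end
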